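/- Let m be a positive integer that can be written as a sum of three squares of integers, m = a² + b² + c². If m ∉ {1, 2, 3, 14}, then there exist integers x, y, z such that 9m = x² + y² + z², the product xyz is not divisible by 3, and x² ≠ 1, y² ≠ 1, z² ≠ 1. -/

import Mathlib

/-!
If one of `a, b, c` is prime to 3, some sign pattern makes `3 ∤ a - εb - δc`, and then the rows of
`M = [[1, 2, 2], [2, 1, -2], [2, -2, 1]]` applied to `(a, εb, δc)` write `9 (a² + b² + c²)` as a sum
of three squares prime to 3, since `M Mᵀ = 9`. For a sorted triple `0 ≤ c ≤ b ≤ a` one of the sign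
patterns (or, once, a permutation) also avoids coordinates `±1`, except on three one-parameter
families, which get explicit representations, and on the triples with `a² + b² + c² ∈ {1, 2, 3, 14}`.
If `3` divides `a, b, c`, then `m = 9n`, and the representation of `9n` obtained by induction
consists of coordinates prime to 3, so the first step applies to it again; the four exceptional
values of `n` are done by hand.
-/

def IsAdmissible (x : ℤ) : Prop := ¬ (3 : ℤ) ∣ x ∧ x ≠ 1 ∧ x ≠ -1

def IsAdmissibleSumThreeSq (N : ℤ) : Prop :=
  ∃ x y z : ℤ, IsAdmissible x ∧ IsAdmissible y ∧ IsAdmissible z ∧ N = x ^ 2 + y ^ 2 + z ^ 2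

lemma IsAdmissible.four_le_sq {x : ℤ} (hx : IsAdmissible x) : 4 ≤ x ^ 2 := by
  unfold IsAdmissible at hx
  rcases (by omega : x ≤ -2 ∨ 2 ≤ x) with h | h <;> nlinarith

lemma IsAdmissible.sq_ne_one {x : ℤ} (hx : IsAdmissible x) : x ^ 2 ≠ 1 := by
  have := hx.four_le_sq
  omega

lemma IsAdmissible.sq_emod_three {x : ℤ} (hx : IsAdmissible x) : x ^ 2 % 3 = 1 := by
  unfold IsAdmissible at hx
  rcases (by omega : x % 3 = 1 ∨ x % 3 = 2) with h | h <;> simp [pow_two, Int.mul_emod, h]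

lemma IsAdmissibleSumThreeSq.emod_three {N : ℤ} (hN : IsAdmissibleSumThreeSq N) : N % 3 = 0 := by
  obtain ⟨x, y, z, hx, hy, hz, rfl⟩ := hN
  have := hx.sq_emod_three
  have := hy.sq_emod_three
  have := hz.sq_emod_three
  omega

lemma IsAdmissibleSumThreeSq.twelve_le {N : ℤ} (hN : IsAdmissibleSumThreeSq N) : 12 ≤ N := by
  obtain ⟨x, y, z, hx, hy, hz, rfl⟩ := hN
  linarith [hx.four_le_sq, hy.four_le_sq, hz.four_le_sq]

/-- The matrix `[[1, 2, 2], [2, 1, -2], [2, -2, 1]]` is three times an orthogonal matrix, and each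
of its rows is congruent to `±(1, -1, -1)` modulo 3. -/
lemma isAdmissibleSumThreeSq_of_not_dvd_sub_sub (a b c : ℤ) {N : ℤ} (h3 : ¬ (3 : ℤ) ∣ a - b - c)
    (hx : a + 2 * b + 2 * c ≠ 1 ∧ a + 2 * b + 2 * c ≠ -1)
    (hy : 2 * a + b - 2 * c ≠ 1 ∧ 2 * a + b - 2 * c ≠ -1)
    (hz : 2 * a - 2 * b + c ≠ 1 ∧ 2 * a - 2 * b + c ≠ -1)
    (hN : N = 9 * (a ^ 2 + b ^ 2 + c ^ 2)) : IsAdmissibleSumThreeSq N :=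
  ⟨a + 2 * b + 2 * c, 2 * a + b - 2 * c, 2 * a - 2 * b + c, ⟨by omega, hx⟩, ⟨by omega, hy⟩,
    ⟨by omega, hz⟩, by rw [hN]; ring⟩

/- On the sorted triples `(6j-1, 3j-1, 0)`, `(9r+9, 6r+7, 6r+5)` and `(18r+3, 15r+2, 6r+1)` (up to
sign) no sign pattern in `isAdmissibleSumThreeSq_of_not_dvd_sub_sub` works; they get explicit
representations, depending on the parameter modulo 3. -/

lemma isAdmissibleSumThreeSq_six_three_zero (j : ℤ) (hj : j ≠ 0) {N : ℤ}
    (hN : N = 9 * ((6 * j - 1) ^ 2 + (3 * j - 1) ^ 2)) : IsAdmissibleSumThreeSq N := by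
  by_cases h3 : (3 : ℤ) ∣ j
  · refine ⟨7 * j - 1, 10 * j - 1, 16 * j - 4, ?_, ?_, ?_, by rw [hN]; ring⟩ <;>
      unfold IsAdmissible <;> omega
  · refine ⟨17 * j - 3, 4 * j, 10 * j - 3, ?_, ?_, ?_, by rw [hN]; ring⟩ <;>
      unfold IsAdmissible <;> omega

lemma isAdmissibleSumThreeSq_nine_six_six (r : ℤ) (hr : r ≠ -1) {N : ℤ}
    (hN : N = 9 * ((9 * r + 9) ^ 2 + (6 * r + 7) ^ 2 + (6 * r + 5) ^ 2)) :
    IsAdmissibleSumThreeSq N := by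
  by_cases h3 : (3 : ℤ) ∣ r - 1
  · refine ⟨11 * r + 15, 10 * r + 9, 34 * r + 33, ?_, ?_, ?_, by rw [hN]; ring⟩ <;>
      unfold IsAdmissible <;> omega
  · refine ⟨11 * r + 7, 10 * r + 11, 34 * r + 35, ?_, ?_, ?_, by rw [hN]; ring⟩ <;>
      unfold IsAdmissible <;> omega

lemma isAdmissibleSumThreeSq_eighteen_fifteen_six (r : ℤ) (hr : r ≠ 0) {N : ℤ}
    (hN : N = 9 * ((18 * r + 3) ^ 2 + (15 * r + 2) ^ 2 + (6 * r + 1) ^ 2)) :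
    IsAdmissibleSumThreeSq N := by
  by_cases h3 : (3 : ℤ) ∣ r + 1
  · refine ⟨14 * r + 3, 35 * r + 6, 62 * r + 9, ?_, ?_, ?_, by rw [hN]; ring⟩ <;>
      unfold IsAdmissible <;> omega
  · refine ⟨38 * r + 5, 10 * r + 1, 61 * r + 10, ?_, ?_, ?_, by rw [hN]; ring⟩ <;>
      unfold IsAdmissible <;> omega

section Sorted

variable {a b c : ℤ} (hc : 0 ≤ c) (hcb : c ≤ b) (hba : b ≤ a) (ha : 2 ≤ a)
include hc hcb hba ha

lemma isAdmissibleSumThreeSq_of_sorted_of_not_dvd_add (h3 : ¬ (3 : ℤ) ∣ a + b + c) :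
    IsAdmissibleSumThreeSq (9 * (a ^ 2 + b ^ 2 + c ^ 2)) := by
  by_cases hx : a - 2 * b - 2 * c ≠ 1 ∧ a - 2 * b - 2 * c ≠ -1
  · exact isAdmissibleSumThreeSq_of_not_dvd_sub_sub a (-b) (-c) (by omega) (by omega)
      (by omega) (by omega) (by ring)
  by_cases h1 : (3 : ℤ) ∣ a - b - c
  swap
  · exact isAdmissibleSumThreeSq_of_not_dvd_sub_sub a b c h1 (by omega) (by omega) (by omega)
      (by ring)
  by_cases h2 : (3 : ℤ) ∣ a - b + c
  swap
  · exact isAdmissibleSumThreeSq_of_not_dvd_sub_sub a b (-c) (by omega) (by omega) (by omega)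
      (by omega) (by ring)
  obtain rfl | hc0 := eq_or_ne c 0
  · by_cases he : a - 2 * b = 1
    · obtain ⟨j, rfl, rfl⟩ : ∃ j, a = 6 * j - 1 ∧ b = 3 * j - 1 := ⟨(b + 1) / 3, by omega, by omega⟩
      exact isAdmissibleSumThreeSq_six_three_zero j (by omega) (by ring)
    · obtain ⟨j, rfl, rfl⟩ : ∃ j, a = 1 - 6 * j ∧ b = 1 - 3 * j := ⟨(1 - b) / 3, by omega, by omega⟩
      exact isAdmissibleSumThreeSq_six_three_zero j (by omega) (by ring)
  · exact isAdmissibleSumThreeSq_of_not_dvd_sub_sub a (-b) c (by omega) (by omega) (by omega)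
      (by omega) (by ring)

lemma isAdmissibleSumThreeSq_of_sorted_of_dvd_add (h3 : ¬ ((3 : ℤ) ∣ a ∧ (3 : ℤ) ∣ b ∧ (3 : ℤ) ∣ c))
    (h321 : ¬ (a = 3 ∧ b = 2 ∧ c = 1)) (h : (3 : ℤ) ∣ a + b + c) :
    IsAdmissibleSumThreeSq (9 * (a ^ 2 + b ^ 2 + c ^ 2)) := by
  by_cases h1 : (3 : ℤ) ∣ a - b - c
  swap
  · by_cases hz : 2 ≤ 2 * a - 2 * b + c
    · exact isAdmissibleSumThreeSq_of_not_dvd_sub_sub a b c h1 (by omega) (by omega) (by omega)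
        (by ring)
    · exact isAdmissibleSumThreeSq_of_not_dvd_sub_sub c a b (by omega) (by omega) (by omega)
        (by omega) (by ring)
  by_cases hz : 2 * a - 2 * b - c ≠ 1 ∧ 2 * a - 2 * b - c ≠ -1
  · exact isAdmissibleSumThreeSq_of_not_dvd_sub_sub a b (-c) (by omega) (by omega) (by omega)
      hz (by ring)
  by_cases hy : 2 * a - b - 2 * c ≠ 1 ∧ 2 * a - b - 2 * c ≠ -1
  swap
  · obtain ⟨r, rfl, rfl, rfl⟩ : ∃ r, a = 9 * r + 9 ∧ b = 6 * r + 7 ∧ c = 6 * r + 5 :=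
      ⟨(c - 5) / 6, by omega, by omega, by omega⟩
    exact isAdmissibleSumThreeSq_nine_six_six r (by omega) (by ring)
  by_cases hx : a - 2 * b + 2 * c ≠ 1 ∧ a - 2 * b + 2 * c ≠ -1
  · exact isAdmissibleSumThreeSq_of_not_dvd_sub_sub a (-b) c (by omega) (by omega) hy (by omega)
      (by ring)
  by_cases he : a - 2 * b + 2 * c = 1
  · obtain ⟨r, rfl, rfl, rfl⟩ : ∃ r, a = 18 * r + 3 ∧ b = 15 * r + 2 ∧ c = 6 * r + 1 :=
      ⟨(c - 1) / 6, by omega, by omega, by omega⟩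
    exact isAdmissibleSumThreeSq_eighteen_fifteen_six r (by omega) (by ring)
  · obtain ⟨r, rfl, rfl, rfl⟩ : ∃ r, a = -(18 * r + 3) ∧ b = -(15 * r + 2) ∧ c = -(6 * r + 1) :=
      ⟨-(c + 1) / 6, by omega, by omega, by omega⟩
    exact isAdmissibleSumThreeSq_eighteen_fifteen_six r (by omega) (by ring)

end Sorted

lemma isAdmissibleSumThreeSq_nine_mul {a b c N : ℤ} (hN : N = a ^ 2 + b ^ 2 + c ^ 2)
    (h3 : ¬ ((3 : ℤ) ∣ a ∧ (3 : ℤ) ∣ b ∧ (3 : ℤ) ∣ c)) (hexc : N ∉ ({1, 2, 3, 14} : Set ℤ)) :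
    IsAdmissibleSumThreeSq (9 * N) := by
  wlog hc : 0 ≤ c generalizing c
  · exact this (c := -c) (by rw [hN]; ring) (by rwa [Int.dvd_neg]) (by omega)
  wlog hb : 0 ≤ b generalizing b
  · exact this (b := -b) (by rw [hN]; ring) (by rwa [Int.dvd_neg]) (by omega)
  wlog ha : 0 ≤ a generalizing a
  · exact this (a := -a) (by rw [hN]; ring) (by rwa [Int.dvd_neg]) (by omega)
  wlog hba : b ≤ a generalizing a b
  · exact this (a := b) (b := a) ha (by rw [hN]; ring) (by tauto) hb (by omega)
  wlog hca : c ≤ a generalizing a c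
  · exact this (a := c) (c := a) ha (by rw [hN]; ring) (by tauto) hc (by omega) (by omega)
  wlog hcb : c ≤ b generalizing b c
  · exact this (b := c) (c := b) hc hb (by rw [hN]; ring) (by tauto) hca hba (by omega)
  subst hN
  simp only [Set.mem_insert_iff, Set.mem_singleton_iff, not_or] at hexc
  have ha2 : 2 ≤ a := by
    by_contra! ha2
    obtain ⟨rfl | rfl, rfl | rfl, rfl | rfl⟩ :
        (a = 0 ∨ a = 1) ∧ (b = 0 ∨ b = 1) ∧ (c = 0 ∨ c = 1) := by omega
    all_goals norm_num at *
  by_cases h : (3 : ℤ) ∣ a + b + c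
  · refine isAdmissibleSumThreeSq_of_sorted_of_dvd_add hc hcb hba ha2 h3 ?_ h
    rintro ⟨rfl, rfl, rfl⟩
    norm_num at hexc
  · exact isAdmissibleSumThreeSq_of_sorted_of_not_dvd_add hc hcb hba ha2 h

lemma IsAdmissibleSumThreeSq.nine_mul {N : ℤ} (h : IsAdmissibleSumThreeSq N) :
    IsAdmissibleSumThreeSq (9 * N) := by
  obtain ⟨x, y, z, hx, -, -, hN⟩ := id h
  refine isAdmissibleSumThreeSq_nine_mul hN (fun h3 => hx.1 h3.1) ?_
  have := h.emod_three
  have := h.twelve_le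
  simp only [Set.mem_insert_iff, Set.mem_singleton_iff]
  omega

lemma isAdmissibleSumThreeSq_eighty_one_mul {n : ℤ} (hn : n ∈ ({1, 2, 3, 14} : Set ℤ)) :
    IsAdmissibleSumThreeSq (81 * n) := by
  simp only [Set.mem_insert_iff, Set.mem_singleton_iff] at hn
  rcases hn with rfl | rfl | rfl | rfl
  exacts [⟨7, 4, 4, by norm_num [IsAdmissible]⟩, ⟨11, 5, 4, by norm_num [IsAdmissible]⟩,
    ⟨13, 7, 5, by norm_num [IsAdmissible]⟩, ⟨25, 22, 5, by norm_num [IsAdmissible]⟩]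

lemma isAdmissibleSumThreeSq_nine_mul_of_sum_three_sq (m : ℕ) (hm : 0 < m)
    (hrep : ∃ a b c : ℤ, (m : ℤ) = a ^ 2 + b ^ 2 + c ^ 2)
    (hexc : m ∉ ({1, 2, 3, 14} : Set ℕ)) : IsAdmissibleSumThreeSq (9 * m) := by
  induction m using Nat.strong_induction_on with
  | _ m ih =>
  obtain ⟨a, b, c, hm_eq⟩ := hrep
  by_cases h3 : (3 : ℤ) ∣ a ∧ (3 : ℤ) ∣ b ∧ (3 : ℤ) ∣ c
  swap
  · refine isAdmissibleSumThreeSq_nine_mul hm_eq h3 ?_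
    simp only [Set.mem_insert_iff, Set.mem_singleton_iff] at hexc ⊢
    omega
  obtain ⟨⟨a, rfl⟩, ⟨b, rfl⟩, ⟨c, rfl⟩⟩ := h3
  obtain ⟨n, hn⟩ := Int.eq_ofNat_of_zero_le (by positivity : 0 ≤ a ^ 2 + b ^ 2 + c ^ 2)
  have hmn : 9 * (m : ℤ) = 81 * n := by rw [hm_eq, ← hn]; ring
  rw [hmn]
  by_cases hexc' : (n : ℤ) ∈ ({1, 2, 3, 14} : Set ℤ)
  · exact isAdmissibleSumThreeSq_eighty_one_mul hexc'
  · have := ih n (by omega) (by omega) ⟨a, b, c, hn.symm⟩ <| by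
      simp only [Set.mem_insert_iff, Set.mem_singleton_iff] at hexc' ⊢
      omega
    rw [show (81 : ℤ) * n = 9 * (9 * n) by ring]
    exact this.nine_mul

/-- If `m ∉ {1, 2, 3, 14}` is a positive integer that is a sum of three squares, then
`9m = x² + y² + z²` for integers with `3 ∤ xyz` and `x², y², z² ≠ 1`. -/
theorem stmt_15 (m : ℕ) (hm : 0 < m)
    (hS3 : ∃ a b c : ℤ, (m : ℤ) = a ^ 2 + b ^ 2 + c ^ 2)
    (hexc : m ∉ ({1, 2, 3, 14} : Set ℕ)) :
    ∃ x y z : ℤ, (9 * m : ℤ) = x ^ 2 + y ^ 2 + z ^ 2 ∧ ¬((3 : ℤ) ∣ x * y * z) ∧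
      x ^ 2 ≠ 1 ∧ y ^ 2 ≠ 1 ∧ z ^ 2 ≠ 1 := by
  obtain ⟨x, y, z, hx, hy, hz, h⟩ := isAdmissibleSumThreeSq_nine_mul_of_sum_three_sq m hm hS3 hexc
  refine ⟨x, y, z, h, ?_, hx.sq_ne_one, hy.sq_ne_one, hz.sq_ne_one⟩
  simp only [Int.prime_three.dvd_mul, not_or]
  exact ⟨⟨hx.1, hy.1⟩, hz.1⟩
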